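/- Let H be a 3-uniform hypergraph containing a vertex a1 of degree exactly 2 whose two hyperedges are {a1,a2,x1} and {a1,a3,x1} with a2 ≠ a3, where d(a2) = d(a3) = 2 and {a1,a2,a3} is not a hyperedge. If H is Berge-K4-free, then adding the hyperedge {a1,a2,a3} does not create a Berge-K4 containing a1 in its core; in particular, if moreover H is Berge-K4-saturated then the pair (a2,a3) must be good. -/

import Mathlib

variable {V : Type*} [DecidableEq V]

/-- A Berge-K4 in the hyperedge set `E` with core vertices `a,b,c,d`:
four distinct vertices together with six distinct hyperedges, one assigned
to each pair of core vertices, each containing its assigned pair. -/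
def IsBergeK4Core (E : Finset (Finset V)) (a b c d : V) : Prop :=
  a ≠ b ∧ a ≠ c ∧ a ≠ d ∧ b ≠ c ∧ b ≠ d ∧ c ≠ d ∧
  ∃ fab fac fad fbc fbd fcd : Finset V,
    fab ∈ E ∧ fac ∈ E ∧ fad ∈ E ∧ fbc ∈ E ∧ fbd ∈ E ∧ fcd ∈ E ∧
    ([fab, fac, fad, fbc, fbd, fcd] : List (Finset V)).Nodup ∧
    a ∈ fab ∧ b ∈ fab ∧ a ∈ fac ∧ c ∈ fac ∧ a ∈ fad ∧ d ∈ fad ∧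
    b ∈ fbc ∧ c ∈ fbc ∧ b ∈ fbd ∧ d ∈ fbd ∧ c ∈ fcd ∧ d ∈ fcd

/-- `E` contains a Berge-K4. -/
def IsBergeK4 (E : Finset (Finset V)) : Prop :=
  ∃ a b c d : V, IsBergeK4Core E a b c d

/-- Every hyperedge has exactly 3 vertices. -/
def Is3Uniform (E : Finset (Finset V)) : Prop := ∀ e ∈ E, e.card = 3

/-- The degree of a vertex: the number of hyperedges containing it. -/
def hdeg (E : Finset (Finset V)) (v : V) : ℕ := (E.filter fun e => v ∈ e).card

/-- A 3-uniform Berge-K4-saturated hypergraph on the (finite) vertex type `V`: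
it is 3-uniform, Berge-K4-free, and adding any non-hyperedge (3-element subset
of the vertices not already a hyperedge) creates a Berge-K4. -/
def IsSaturated [Fintype V] (E : Finset (Finset V)) : Prop :=
  Is3Uniform E ∧ ¬ IsBergeK4 E ∧
    ∀ e : Finset V, e.card = 3 → e ∉ E → IsBergeK4 (insert e E)

/-- The pair `(u,v)` is good: there are two further vertices `x,y` (so that
`u,v,x,y` are four distinct vertices) and five distinct hyperedges, one for
each pair among `u,v,x,y` other than `uv`, each containing its assigned pair;
i.e. adding an edge on `{u,v}` completes a Berge-K4 with core `{u,v,x,y}`. -/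
def GoodPair (E : Finset (Finset V)) (u v : V) : Prop :=
  ∃ x y : V, u ≠ v ∧ u ≠ x ∧ u ≠ y ∧ v ≠ x ∧ v ≠ y ∧ x ≠ y ∧
  ∃ eux euy evx evy exy : Finset V,
    eux ∈ E ∧ euy ∈ E ∧ evx ∈ E ∧ evy ∈ E ∧ exy ∈ E ∧
    ([eux, euy, evx, evy, exy] : List (Finset V)).Nodup ∧
    u ∈ eux ∧ x ∈ eux ∧ u ∈ euy ∧ y ∈ euy ∧
    v ∈ evx ∧ x ∈ evx ∧ v ∈ evy ∧ y ∈ evy ∧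
    x ∈ exy ∧ y ∈ exy

/-!
Once `e = {a₁, a₂, a₃}` is added, all of `a₁, a₂, a₃` have degree at most 3. A core vertex of
degree at most 3 lies in no hyperedge other than its three core hyperedges, so two such core
vertices share exactly one hyperedge. If `a₁` were a core vertex, `e` would be the hyperedge
assigned to `a₁` and some `aᵢ ∈ e`; but `a₁` and `aᵢ` also share `{a₁, aᵢ, x₁}`. So the core
avoids `a₁`; since `H` is Berge-K4-free the new Berge-K4 uses `e`, assigned to a pair of core
vertices in `e \ {a₁} = {a₂, a₃}`, and its other five hyperedges show that `(a₂, a₃)` is good.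
-/

open Finset

structure IsBergeK4Edges {α : Type*} (F : Finset (Finset α)) (a b c d : α)
    (fab fac fad fbc fbd fcd : Finset α) : Prop where
  ne_ab : a ≠ b
  ne_ac : a ≠ c
  ne_ad : a ≠ d
  ne_bc : b ≠ c
  ne_bd : b ≠ d
  ne_cd : c ≠ d
  fab_mem : fab ∈ F
  fac_mem : fac ∈ F
  fad_mem : fad ∈ F
  fbc_mem : fbc ∈ F
  fbd_mem : fbd ∈ F
  fcd_mem : fcd ∈ F
  nodup : [fab, fac, fad, fbc, fbd, fcd].Nodup
  a_mem_fab : a ∈ fab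
  b_mem_fab : b ∈ fab
  a_mem_fac : a ∈ fac
  c_mem_fac : c ∈ fac
  a_mem_fad : a ∈ fad
  d_mem_fad : d ∈ fad
  b_mem_fbc : b ∈ fbc
  c_mem_fbc : c ∈ fbc
  b_mem_fbd : b ∈ fbd
  d_mem_fbd : d ∈ fbd
  c_mem_fcd : c ∈ fcd
  d_mem_fcd : d ∈ fcd

section BergeK4

variable {α : Type*} {F E : Finset (Finset α)} {e g : Finset α} {a b c d u v : α}
  {fab fac fad fbc fbd fcd : Finset α}

theorem isBergeK4Core_iff_exists_edges :
    IsBergeK4Core F a b c d ↔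
      ∃ fab fac fad fbc fbd fcd, IsBergeK4Edges F a b c d fab fac fad fbc fbd fcd := by
  constructor
  · rintro ⟨h1, h2, h3, h4, h5, h6, fab, fac, fad, fbc, fbd, fcd,
      m1, m2, m3, m4, m5, m6, nd, p1, p2, p3, p4, p5, p6, p7, p8, p9, p10, p11, p12⟩
    exact ⟨fab, fac, fad, fbc, fbd, fcd, h1, h2, h3, h4, h5, h6,
      m1, m2, m3, m4, m5, m6, nd, p1, p2, p3, p4, p5, p6, p7, p8, p9, p10, p11, p12⟩
  · rintro ⟨fab, fac, fad, fbc, fbd, fcd, h1, h2, h3, h4, h5, h6,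
      m1, m2, m3, m4, m5, m6, nd, p1, p2, p3, p4, p5, p6, p7, p8, p9, p10, p11, p12⟩
    exact ⟨h1, h2, h3, h4, h5, h6, fab, fac, fad, fbc, fbd, fcd,
      m1, m2, m3, m4, m5, m6, nd, p1, p2, p3, p4, p5, p6, p7, p8, p9, p10, p11, p12⟩

namespace IsBergeK4Edges

theorem swap_ab (h : IsBergeK4Edges F a b c d fab fac fad fbc fbd fcd) :
    IsBergeK4Edges F b a c d fab fbc fbd fac fad fcd :=
  ⟨h.ne_ab.symm, h.ne_bc, h.ne_bd, h.ne_ac, h.ne_ad, h.ne_cd,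
    h.fab_mem, h.fbc_mem, h.fbd_mem, h.fac_mem, h.fad_mem, h.fcd_mem,
    by have := h.nodup; simp only [List.nodup_cons, List.mem_cons, List.not_mem_nil,
      List.nodup_nil, not_or, and_true] at this ⊢; tauto,
    h.b_mem_fab, h.a_mem_fab, h.b_mem_fbc, h.c_mem_fbc, h.b_mem_fbd, h.d_mem_fbd,
    h.a_mem_fac, h.c_mem_fac, h.a_mem_fad, h.d_mem_fad, h.c_mem_fcd, h.d_mem_fcd⟩

theorem swap_bc (h : IsBergeK4Edges F a b c d fab fac fad fbc fbd fcd) :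
    IsBergeK4Edges F a c b d fac fab fad fbc fcd fbd :=
  ⟨h.ne_ac, h.ne_ab, h.ne_ad, h.ne_bc.symm, h.ne_cd, h.ne_bd,
    h.fac_mem, h.fab_mem, h.fad_mem, h.fbc_mem, h.fcd_mem, h.fbd_mem,
    by have := h.nodup; simp only [List.nodup_cons, List.mem_cons, List.not_mem_nil,
      List.nodup_nil, not_or, and_true] at this ⊢; tauto,
    h.a_mem_fac, h.c_mem_fac, h.a_mem_fab, h.b_mem_fab, h.a_mem_fad, h.d_mem_fad,
    h.c_mem_fbc, h.b_mem_fbc, h.c_mem_fcd, h.d_mem_fcd, h.b_mem_fbd, h.d_mem_fbd⟩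

theorem swap_bd (h : IsBergeK4Edges F a b c d fab fac fad fbc fbd fcd) :
    IsBergeK4Edges F a d c b fad fac fab fcd fbd fbc :=
  ⟨h.ne_ad, h.ne_ac, h.ne_ab, h.ne_cd.symm, h.ne_bd.symm, h.ne_bc.symm,
    h.fad_mem, h.fac_mem, h.fab_mem, h.fcd_mem, h.fbd_mem, h.fbc_mem,
    by have := h.nodup; simp only [List.nodup_cons, List.mem_cons, List.not_mem_nil,
      List.nodup_nil, not_or, and_true] at this ⊢; tauto,
    h.a_mem_fad, h.d_mem_fad, h.a_mem_fac, h.c_mem_fac, h.a_mem_fab, h.b_mem_fab,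
    h.d_mem_fcd, h.c_mem_fcd, h.d_mem_fbd, h.b_mem_fbd, h.c_mem_fbc, h.b_mem_fbc⟩

end IsBergeK4Edges

theorem GoodPair.ne : GoodPair E u v → u ≠ v
  | ⟨_, _, huv, _⟩ => huv

theorem GoodPair.symm (h : GoodPair E u v) : GoodPair E v u := by
  obtain ⟨x, y, huv, hux, huy, hvx, hvy, hxy, eux, euy, evx, evy, exy,
    m1, m2, m3, m4, m5, nd, p1, p2, p3, p4, p5, p6, p7, p8, p9, p10⟩ := h
  refine ⟨x, y, huv.symm, hvx, hvy, hux, huy, hxy, evx, evy, eux, euy, exy,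
    m3, m4, m1, m2, m5, ?_, p5, p6, p7, p8, p1, p2, p3, p4, p9, p10⟩
  simp only [List.nodup_cons, List.mem_cons, List.not_mem_nil, List.nodup_nil, not_or,
    and_true] at nd ⊢
  tauto

variable [DecidableEq α]

theorem hdeg_insert_le (E : Finset (Finset α)) (e : Finset α) (v : α) :
    hdeg (insert e E) v ≤ hdeg E v + 1 := by
  unfold hdeg
  rw [filter_insert]
  split_ifs
  · exact card_insert_le _ _
  · exact Nat.le_succ _

theorem eq_or_eq_or_eq_of_hdeg_le_three {f₁ f₂ f₃ : Finset α}
    (hv : hdeg F v ≤ 3) (h₁ : f₁ ∈ F) (h₂ : f₂ ∈ F) (h₃ : f₃ ∈ F)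
    (hv₁ : v ∈ f₁) (hv₂ : v ∈ f₂) (hv₃ : v ∈ f₃)
    (h₁₂ : f₁ ≠ f₂) (h₁₃ : f₁ ≠ f₃) (h₂₃ : f₂ ≠ f₃) (hg : g ∈ F) (hvg : v ∈ g) :
    g = f₁ ∨ g = f₂ ∨ g = f₃ := by
  have hsub : {f₁, f₂, f₃} ⊆ F.filter (v ∈ ·) := by
    simp only [insert_subset_iff, singleton_subset_iff, mem_filter]
    exact ⟨⟨h₁, hv₁⟩, ⟨h₂, hv₂⟩, ⟨h₃, hv₃⟩⟩
  have hcard : #{f₁, f₂, f₃} = 3 := card_eq_three.mpr ⟨f₁, f₂, f₃, h₁₂, h₁₃, h₂₃, rfl⟩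
  have heq := eq_of_subset_of_card_le hsub (hcard ▸ hv)
  have hg' : g ∈ F.filter (v ∈ ·) := mem_filter.mpr ⟨hg, hvg⟩
  simpa only [← heq, mem_insert, mem_singleton] using hg'

namespace IsBergeK4Edges

theorem eq_or_eq_or_eq_of_mem (h : IsBergeK4Edges F a b c d fab fac fad fbc fbd fcd)
    (ha : hdeg F a ≤ 3) (hg : g ∈ F) (hag : a ∈ g) : g = fab ∨ g = fac ∨ g = fad := by
  have nd := h.nodup
  simp only [List.nodup_cons, List.mem_cons, List.not_mem_nil, List.nodup_nil, not_or,
    and_true] at nd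
  exact eq_or_eq_or_eq_of_hdeg_le_three ha h.fab_mem h.fac_mem h.fad_mem h.a_mem_fab
    h.a_mem_fac h.a_mem_fad nd.1.1 nd.1.2.1 nd.2.1.1 hg hag

theorem eq_of_mem_of_mem (h : IsBergeK4Edges F a b c d fab fac fad fbc fbd fcd)
    (ha : hdeg F a ≤ 3) (hb : hdeg F b ≤ 3) (hg : g ∈ F) (hag : a ∈ g) (hbg : b ∈ g) :
    g = fab := by
  have nd := h.nodup
  simp only [List.nodup_cons, List.mem_cons, List.not_mem_nil, List.nodup_nil, not_or,
    and_true] at nd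
  have := h.eq_or_eq_or_eq_of_mem ha hg hag
  have := h.swap_ab.eq_or_eq_or_eq_of_mem hb hg hbg
  grind

theorem goodPair_of_insert (h : IsBergeK4Edges (insert e E) a b c d e fac fad fbc fbd fcd) :
    GoodPair E a b := by
  obtain ⟨⟨hac, had, hbc, hbd, hcd⟩, nd⟩ :
      (e ≠ fac ∧ e ≠ fad ∧ e ≠ fbc ∧ e ≠ fbd ∧ e ≠ fcd) ∧ [fac, fad, fbc, fbd, fcd].Nodup := by
    simpa only [List.nodup_cons, List.mem_cons, List.not_mem_nil, not_or, or_false]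
      using h.nodup
  have mem_of_ne {f} (hf : f ∈ insert e E) (hfe : e ≠ f) : f ∈ E :=
    (mem_insert.mp hf).resolve_left hfe.symm
  exact ⟨c, d, h.ne_ab, h.ne_ac, h.ne_ad, h.ne_bc, h.ne_bd, h.ne_cd, fac, fad, fbc, fbd, fcd,
    mem_of_ne h.fac_mem hac, mem_of_ne h.fad_mem had, mem_of_ne h.fbc_mem hbc,
    mem_of_ne h.fbd_mem hbd, mem_of_ne h.fcd_mem hcd, nd,
    h.a_mem_fac, h.c_mem_fac, h.a_mem_fad, h.d_mem_fad, h.b_mem_fbc, h.c_mem_fbc,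
    h.b_mem_fbd, h.d_mem_fbd, h.c_mem_fcd, h.d_mem_fcd⟩

end IsBergeK4Edges

namespace IsBergeK4Core

theorem exists_edges_of_mem (h : IsBergeK4Core F a b c d)
    (hv : v ∈ ({a, b, c, d} : Finset α)) :
    ∃ b' c' d' fab fac fad fbc fbd fcd, IsBergeK4Edges F v b' c' d' fab fac fad fbc fbd fcd := by
  obtain ⟨fab, fac, fad, fbc, fbd, fcd, h⟩ := isBergeK4Core_iff_exists_edges.mp h
  simp only [mem_insert, mem_singleton] at hv
  rcases hv with rfl | rfl | rfl | rfl
  exacts [⟨_, _, _, _, _, _, _, _, _, h⟩, ⟨_, _, _, _, _, _, _, _, _, h.swap_ab⟩,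
    ⟨_, _, _, _, _, _, _, _, _, h.swap_bc.swap_ab⟩, ⟨_, _, _, _, _, _, _, _, _, h.swap_bd.swap_ab⟩]

theorem notMem_of_insert (h : IsBergeK4Core (insert e E) a b c d) (he : e ∉ E) (hv : v ∈ e)
    (hlow : ∀ y ∈ e, hdeg E y ≤ 2) (hshare : ∀ y ∈ e, y ≠ v → ∃ g ∈ E, v ∈ g ∧ y ∈ g) :
    v ∉ ({a, b, c, d} : Finset α) := by
  intro hcore
  obtain ⟨b, c, d, fab, fac, fad, fbc, fbd, fcd, h⟩ := h.exists_edges_of_mem hcore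
  have hdeg' (y) (hy : y ∈ e) : hdeg (insert e E) y ≤ 3 :=
    (hdeg_insert_le E e y).trans (Nat.succ_le_succ (hlow y hy))
  -- `e` cannot be assigned to `v` and `b ∈ e`, as `v` and `b` also share a hyperedge of `E`.
  have key {b c d fac fad fbc fbd fcd}
      (h : IsBergeK4Edges (insert e E) v b c d e fac fad fbc fbd fcd) : False := by
    obtain ⟨g, hg, hvg, hbg⟩ := hshare b h.b_mem_fab h.ne_ab.symm
    have hge : g = e :=
      h.eq_of_mem_of_mem (hdeg' v hv) (hdeg' b h.b_mem_fab) (mem_insert_of_mem hg) hvg hbg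
    exact he (hge ▸ hg)
  rcases h.eq_or_eq_or_eq_of_mem (hdeg' v hv) (mem_insert_self e E) hv with rfl | rfl | rfl
  exacts [key h, key h.swap_bc, key h.swap_bd]

theorem exists_goodPair_of_insert (h : IsBergeK4Core (insert e E) a b c d)
    (hE : ¬ IsBergeK4 E) :
    ∃ u ∈ ({a, b, c, d} : Finset α), ∃ w ∈ ({a, b, c, d} : Finset α),
      u ∈ e ∧ w ∈ e ∧ GoodPair E u w := by
  obtain ⟨fab, fac, fad, fbc, fbd, fcd, h⟩ := isBergeK4Core_iff_exists_edges.mp h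
  by_cases hab : fab = e
  · subst hab
    exact ⟨a, by simp, b, by simp, h.a_mem_fab, h.b_mem_fab, h.goodPair_of_insert⟩
  by_cases hac : fac = e
  · subst hac
    exact ⟨a, by simp, c, by simp, h.a_mem_fac, h.c_mem_fac, h.swap_bc.goodPair_of_insert⟩
  by_cases had : fad = e
  · subst had
    exact ⟨a, by simp, d, by simp, h.a_mem_fad, h.d_mem_fad, h.swap_bd.goodPair_of_insert⟩
  by_cases hbc : fbc = e
  · subst hbc
    exact ⟨b, by simp, c, by simp, h.b_mem_fbc, h.c_mem_fbc,
      h.swap_ab.swap_bc.goodPair_of_insert⟩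
  by_cases hbd : fbd = e
  · subst hbd
    exact ⟨b, by simp, d, by simp, h.b_mem_fbd, h.d_mem_fbd,
      h.swap_ab.swap_bd.goodPair_of_insert⟩
  by_cases hcd : fcd = e
  · subst hcd
    exact ⟨c, by simp, d, by simp, h.c_mem_fcd, h.d_mem_fcd,
      h.swap_bc.swap_ab.swap_bd.goodPair_of_insert⟩
  have mem_of_ne {f} (hf : f ∈ insert e E) (hfe : f ≠ e) : f ∈ E :=
    (mem_insert.mp hf).resolve_left hfe
  exact absurd ⟨a, b, c, d, isBergeK4Core_iff_exists_edges.mpr ⟨fab, fac, fad, fbc, fbd, fcd,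
    { h with
      fab_mem := mem_of_ne h.fab_mem hab, fac_mem := mem_of_ne h.fac_mem hac
      fad_mem := mem_of_ne h.fad_mem had, fbc_mem := mem_of_ne h.fbc_mem hbc
      fbd_mem := mem_of_ne h.fbd_mem hbd, fcd_mem := mem_of_ne h.fcd_mem hcd }⟩⟩ hE

end IsBergeK4Core

theorem ne_of_card_eq_three {x y z : α} (h : #({x, y, z} : Finset α) = 3) : x ≠ y := by
  rintro rfl
  rw [insert_idem] at h
  exact absurd (card_le_two (a := x) (b := z)) (by omega)

end BergeK4

theorem stmt_17_general [Fintype V] (E : Finset (Finset V))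
    (a1 a2 a3 x1 : V) (h23 : a2 ≠ a3)
    (he1 : ({a1, a2, x1} : Finset V) ∈ E) (he2 : ({a1, a3, x1} : Finset V) ∈ E)
    (hd1 : hdeg E a1 = 2) (hd2 : hdeg E a2 = 2) (hd3 : hdeg E a3 = 2)
    (hne : ({a1, a2, a3} : Finset V) ∉ E) :
    (∀ a b c d : V, IsBergeK4Core (insert ({a1, a2, a3} : Finset V) E) a b c d →
      a1 ∉ ({a, b, c, d} : Finset V)) ∧
    (IsSaturated E → GoodPair E a2 a3) := by
  have hcore (a b c d : V) (h : IsBergeK4Core (insert ({a1, a2, a3} : Finset V) E) a b c d) :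
      a1 ∉ ({a, b, c, d} : Finset V) := by
    refine h.notMem_of_insert hne (by simp) ?_ ?_
    · simp only [mem_insert, mem_singleton]
      rintro y (rfl | rfl | rfl) <;> omega
    · simp only [mem_insert, mem_singleton]
      rintro y (rfl | rfl | rfl) hy
      exacts [absurd rfl hy, ⟨_, he1, by simp, by simp⟩, ⟨_, he2, by simp, by simp⟩]
  refine ⟨hcore, fun ⟨h3, hfree, hadd⟩ => ?_⟩
  have h12 : a1 ≠ a2 := ne_of_card_eq_three (h3 _ he1)
  have h13 : a1 ≠ a3 := ne_of_card_eq_three (h3 _ he2)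
  obtain ⟨a, b, c, d, h⟩ := hadd _ (card_eq_three.mpr ⟨a1, a2, a3, h12, h13, h23, rfl⟩) hne
  obtain ⟨u, hu, w, hw, hue, hwe, huw⟩ := h.exists_goodPair_of_insert hfree
  have hu1 : u ≠ a1 := fun hua => hcore a b c d h (hua ▸ hu)
  have hw1 : w ≠ a1 := fun hwa => hcore a b c d h (hwa ▸ hw)
  simp only [mem_insert, mem_singleton, hu1, hw1, false_or] at hue hwe
  rcases hue with rfl | rfl <;> rcases hwe with rfl | rfl
  exacts [absurd rfl huw.ne, huw, huw.symm, absurd rfl huw.ne]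

theorem stmt_17 [Fintype V] (E : Finset (Finset V)) (h3 : Is3Uniform E)
    (hfree : ¬ IsBergeK4 E) (a1 a2 a3 x1 : V) (h23 : a2 ≠ a3)
    (he1 : ({a1, a2, x1} : Finset V) ∈ E) (he2 : ({a1, a3, x1} : Finset V) ∈ E)
    (hd1 : hdeg E a1 = 2) (hd2 : hdeg E a2 = 2) (hd3 : hdeg E a3 = 2)
    (hne : ({a1, a2, a3} : Finset V) ∉ E) :
    (∀ a b c d : V, IsBergeK4Core (insert ({a1, a2, a3} : Finset V) E) a b c d →
      a1 ∉ ({a, b, c, d} : Finset V)) ∧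
    (IsSaturated E → GoodPair E a2 a3) :=
  stmt_17_general E a1 a2 a3 x1 h23 he1 he2 hd1 hd2 hd3 hne
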